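/- arXiv:2011.05245 — 3 statements merged into one kernel-verified Lean document; each statement's English description precedes it below -/
import Mathlib

section
/- Let pen : ℝ^d → ℝ be a convex function, W an n×d real matrix, y ∈ ℝ^n, and suppose β̂ minimizes β ↦ ‖y - Wβ‖₂² + pen(β) over ℝ^d. Then for every β ∈ ℝ^d, ‖y - Wβ̂‖₂² + pen(β̂) + ‖W(β̂ - β)‖₂² ≤ ‖y - Wβ‖₂² + pen(β). -/
open Finset

/-- Lemma 1 of Bellec et al. (2018): strong optimality inequality for convex
penalized least squares. -/
theorem convex_penalized_least_squares_strong_optimality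
    {n d : ℕ} (pen : (Fin d → ℝ) → ℝ) (hpen : ConvexOn ℝ Set.univ pen)
    (W : Matrix (Fin n) (Fin d) ℝ) (y : Fin n → ℝ)
    (βhat : Fin d → ℝ)
    (hmin : ∀ β : Fin d → ℝ,
      ∑ i, (y i - W.mulVec βhat i) ^ 2 + pen βhat ≤
        ∑ i, (y i - W.mulVec β i) ^ 2 + pen β) :
    ∀ β : Fin d → ℝ,
      ∑ i, (y i - W.mulVec βhat i) ^ 2 + pen βhat
        + ∑ i, (W.mulVec (βhat - β) i) ^ 2 ≤
      ∑ i, (y i - W.mulVec β i) ^ 2 + pen β := by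
  intro β
  set A : ℝ := ∑ i, (y i - W.mulVec βhat i) ^ 2 + pen βhat with hA
  set B : ℝ := ∑ i, (y i - W.mulVec β i) ^ 2 + pen β with hB
  set S : ℝ := ∑ i, (W.mulVec (βhat - β) i) ^ 2 with hS
  -- key inequality for t ∈ (0,1)
  have key : ∀ t : ℝ, t ∈ Set.Ioo (0:ℝ) 1 → A + (1 - t) * S ≤ B := by
    intro t ht
    obtain ⟨ht0, ht1⟩ := ht
    set βt : Fin d → ℝ := βhat + t • (β - βhat) with hβt
    have hmv : ∀ i, y i - W.mulVec βt i =
        (1 - t) * (y i - W.mulVec βhat i) + t * (y i - W.mulVec β i) := by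
      intro i
      simp only [hβt, Matrix.mulVec_add, Matrix.mulVec_smul, Matrix.mulVec_sub,
        Pi.add_apply, Pi.smul_apply, Pi.sub_apply, smul_eq_mul]
      ring
    have hmv2 : ∀ i, W.mulVec (βhat - β) i =
        (y i - W.mulVec β i) - (y i - W.mulVec βhat i) := by
      intro i
      simp only [Matrix.mulVec_sub, Pi.sub_apply]
      ring
    have hsum : ∑ i, (y i - W.mulVec βt i) ^ 2 =
        (1 - t) * ∑ i, (y i - W.mulVec βhat i) ^ 2
        + t * ∑ i, (y i - W.mulVec β i) ^ 2 - t * (1 - t) * S := by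
      rw [hS, Finset.mul_sum, Finset.mul_sum, Finset.mul_sum,
        ← Finset.sum_add_distrib, ← Finset.sum_sub_distrib]
      refine Finset.sum_congr rfl fun i _ => ?_
      rw [hmv i, hmv2 i]
      ring
    have hpent : pen βt ≤ (1 - t) * pen βhat + t * pen β := by
      have := hpen.2 (Set.mem_univ βhat) (Set.mem_univ β)
        (by linarith : (0:ℝ) ≤ 1 - t) (le_of_lt ht0) (by ring)
      have heq : (1 - t) • βhat + t • β = βt := by
        rw [hβt]; module
      rw [heq] at this; simpa using this
    have h1 : A ≤ ∑ i, (y i - W.mulVec βt i) ^ 2 + pen βt := hmin βt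
    have h2 : A ≤ (1 - t) * A + t * B - t * (1 - t) * S := by
      rw [hsum] at h1
      rw [hA, hB]
      calc A ≤ _ := h1
        _ ≤ _ := by linarith [hpent]
    have h3 : t * (A + (1 - t) * S) ≤ t * B := by nlinarith [h2]
    exact le_of_mul_le_mul_left h3 ht0
  -- take the limit t → 0⁺
  have htend : Filter.Tendsto (fun t : ℝ => A + (1 - t) * S)
      (nhdsWithin 0 (Set.Ioi 0)) (nhds (A + S)) := by
    have : Filter.Tendsto (fun t : ℝ => A + (1 - t) * S) (nhds 0)
        (nhds (A + (1 - 0) * S)) := by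
      apply Filter.Tendsto.add tendsto_const_nhds
      exact (Filter.Tendsto.sub tendsto_const_nhds Filter.tendsto_id).mul
        tendsto_const_nhds
    simpa using this.mono_left nhdsWithin_le_nhds
  refine le_of_tendsto htend ?_
  filter_upwards [Ioo_mem_nhdsGT_of_mem (by norm_num : (0:ℝ) ∈ Set.Ico 0 1)]
    with t ht using key t ht
end

section
/- If U follows a chi-squared distribution with r degrees of freedom, then for any x > 0, P(U - r ≥ 2√(rx) + 2x) ≤ exp(-x). -/
open MeasureTheory ProbabilityTheory Real

/-! Chernoff's bound with the exact moment generating function `(1 - 2t)^(-r/2)` of `χ²_r`.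
Optimising in `t` at the threshold `c = r + 2√(rx) + 2x` gives `c/r = 1 + y + y²/2` with
`y = 2√(rx)/r`, and `1 + y + y²/2 ≤ exp y` turns the bound into `exp (-x)`. -/

theorem measure_ge_le_exp_mul_lintegral_exp {α : Type*} [MeasurableSpace α] {μ : Measure α}
    {X : α → ℝ} (hX : AEMeasurable X μ) {t : ℝ} (ht : 0 ≤ t) (c : ℝ) :
    μ {ω | c ≤ X ω} ≤
      ENNReal.ofReal (exp (-(t * c))) * ∫⁻ ω, ENNReal.ofReal (exp (t * X ω)) ∂μ := by
  have hsub : {ω | c ≤ X ω} ⊆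
      {ω | ENNReal.ofReal (exp (t * c)) ≤ ENNReal.ofReal (exp (t * X ω))} := fun ω hω =>
    ENNReal.ofReal_le_ofReal (exp_le_exp.2 (mul_le_mul_of_nonneg_left hω ht))
  calc μ {ω | c ≤ X ω}
      ≤ μ {ω | ENNReal.ofReal (exp (t * c)) ≤ ENNReal.ofReal (exp (t * X ω))} := measure_mono hsub
    _ ≤ (∫⁻ ω, ENNReal.ofReal (exp (t * X ω)) ∂μ) / ENNReal.ofReal (exp (t * c)) :=
      meas_ge_le_lintegral_div ((hX.const_mul t).exp.ennreal_ofReal)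
        (by simp [exp_pos]) ENNReal.ofReal_ne_top
    _ = _ := by
      rw [ENNReal.div_eq_inv_mul, ← ENNReal.ofReal_inv_of_pos (exp_pos _), ← exp_neg]

-- `Γ 0 = 0` kills the normalising constant, so `χ²₀` is the zero measure rather than `δ₀`.
theorem gammaMeasure_zero_left (b : ℝ) : gammaMeasure 0 b = 0 := by
  have hpdf : gammaPDF 0 b = 0 := by
    funext y
    simp [gammaPDF_eq, Gamma_zero]
  rw [gammaMeasure, hpdf, withDensity_zero]

theorem lintegral_exp_mul_gammaMeasure {a b t : ℝ} (ha : 0 < a) (hb : 0 ≤ b) (htb : t < b) :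
    ∫⁻ y, ENNReal.ofReal (exp (t * y)) ∂(gammaMeasure a b) =
      ENNReal.ofReal ((b / (b - t)) ^ a) := by
  have hbt : 0 < b - t := sub_pos.2 htb
  have htilt : ∀ y, gammaPDF a b y * ENNReal.ofReal (exp (t * y)) =
      ENNReal.ofReal ((b / (b - t)) ^ a) * gammaPDF a (b - t) y := by
    intro y
    rcases lt_or_ge y 0 with hy | hy
    · simp [gammaPDF_of_neg hy]
    · rw [gammaPDF_of_nonneg hy, gammaPDF_of_nonneg hy,
        ← ENNReal.ofReal_mul (by positivity), ← ENNReal.ofReal_mul (by positivity)]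
      congr 1
      have hpow : b ^ a = (b / (b - t)) ^ a * (b - t) ^ a := by
        rw [← mul_rpow (by positivity) hbt.le, div_mul_cancel₀ _ hbt.ne']
      have hexp : exp (-((b - t) * y)) = exp (-(b * y)) * exp (t * y) := by
        rw [← exp_add]; ring_nf
      rw [hpow, hexp]; ring
  rw [gammaMeasure, lintegral_withDensity_eq_lintegral_mul _ (f := gammaPDF a b)
      (measurable_gammaPDFReal a b).ennreal_ofReal (measurable_const_mul t).exp.ennreal_ofReal]
  simp only [Pi.mul_apply, htilt]
  rw [lintegral_const_mul _ (f := gammaPDF a (b - t)) (measurable_gammaPDFReal a (b - t)).ennreal_ofReal,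
    lintegral_gammaPDF_eq_one ha hbt, mul_one]

theorem one_add_add_sq_div_two_rpow_le_exp {y p : ℝ} (hy : 0 ≤ y) (hp : 0 ≤ p) :
    (1 + y + y ^ 2 / 2) ^ p ≤ exp (y * p) := by
  rw [exp_mul]
  exact rpow_le_rpow (by positivity) (quadratic_le_exp_of_nonneg hy) hp

theorem gammaMeasure_chiSq_tail_le (r : ℕ) {x : ℝ} (hx : 0 ≤ x) :
    gammaMeasure (r / 2 : ℝ) (1 / 2 : ℝ) {y | (r : ℝ) + 2 * sqrt (r * x) + 2 * x ≤ y}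
      ≤ ENNReal.ofReal (exp (-x)) := by
  rcases Nat.eq_zero_or_pos r with rfl | hr_pos
  · simp [gammaMeasure_zero_left]
  have hr : (0 : ℝ) < r := Nat.cast_pos.2 hr_pos
  set v := sqrt (r * x)
  have hv : 0 ≤ v := sqrt_nonneg _
  have hv2 : v ^ 2 = r * x := sq_sqrt (by positivity)
  set c := (r : ℝ) + 2 * v + 2 * x with hc_def
  have hc : 0 < c := by positivity
  -- `t` minimises `-t c - (r/2) log (1 - 2t)`, i.e. `c = r / (1 - 2t)`.
  set t := (c - r) / (2 * c) with ht_def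
  have ht : 0 ≤ t := div_nonneg (by linarith) (by positivity)
  have hhalf_sub : 1 / 2 - t = r / (2 * c) := by
    rw [ht_def]; field_simp; ring
  have ht_lt : t < 1 / 2 := by linarith [show 0 < r / (2 * c) by positivity]
  have hmgf_base : (1 / 2 : ℝ) / (1 / 2 - t) = 1 + 2 * v / r + (2 * v / r) ^ 2 / 2 := by
    rw [hhalf_sub, hc_def]
    field_simp
    linear_combination -2 * hv2
  have htc : t * c = v + x := by
    rw [ht_def, hc_def]
    field_simp
    ring
  calc gammaMeasure (r / 2 : ℝ) (1 / 2 : ℝ) {y | c ≤ y}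
      ≤ ENNReal.ofReal (exp (-(t * c))) *
          ∫⁻ y, ENNReal.ofReal (exp (t * y)) ∂(gammaMeasure (r / 2 : ℝ) (1 / 2 : ℝ)) :=
        measure_ge_le_exp_mul_lintegral_exp aemeasurable_id ht c
    _ = ENNReal.ofReal (exp (-(v + x)) * (1 + 2 * v / r + (2 * v / r) ^ 2 / 2) ^ (r / 2 : ℝ)) := by
        rw [lintegral_exp_mul_gammaMeasure (by positivity) (by norm_num) ht_lt, hmgf_base, htc,
          ENNReal.ofReal_mul (exp_pos _).le]
    _ ≤ ENNReal.ofReal (exp (-(v + x)) * exp v) := by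
        gcongr
        calc (1 + 2 * v / r + (2 * v / r) ^ 2 / 2) ^ (r / 2 : ℝ)
            ≤ exp (2 * v / r * (r / 2)) :=
              one_add_add_sq_div_two_rpow_le_exp (by positivity) (by positivity)
          _ = exp v := by field_simp
    _ = ENNReal.ofReal (exp (-x)) := by
        rw [← exp_add]; ring_nf

theorem chiSq_laurent_massart_tail_general
    {Ω : Type*} [MeasurableSpace Ω] (P : Measure Ω)
    (U : Ω → ℝ) (hmeas : Measurable U) (r : ℕ)
    (hU : Measure.map U P = gammaMeasure (r / 2 : ℝ) (1 / 2 : ℝ))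
    (x : ℝ) (hx : 0 < x) :
    P {ω | (r : ℝ) + 2 * Real.sqrt (r * x) + 2 * x ≤ U ω}
      ≤ ENNReal.ofReal (Real.exp (-x)) := by
  calc P {ω | (r : ℝ) + 2 * Real.sqrt (r * x) + 2 * x ≤ U ω}
      = Measure.map U P {y | (r : ℝ) + 2 * Real.sqrt (r * x) + 2 * x ≤ y} :=
        (Measure.map_apply hmeas measurableSet_Ici).symm
    _ ≤ ENNReal.ofReal (Real.exp (-x)) := hU ▸ gammaMeasure_chiSq_tail_le r hx.le

/-- Laurent–Massart tail bound: if `U` is chi-squared with `r` degrees of freedom, then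
for any `x > 0`, `P(U - r ≥ 2√(rx) + 2x) ≤ exp (-x)`. -/
theorem chiSq_laurent_massart_tail
    {Ω : Type*} [MeasurableSpace Ω] (P : Measure Ω) [IsProbabilityMeasure P]
    (U : Ω → ℝ) (hmeas : Measurable U) (r : ℕ)
    (hU : Measure.map U P = gammaMeasure (r / 2 : ℝ) (1 / 2 : ℝ))
    (x : ℝ) (hx : 0 < x) :
    P {ω | (r : ℝ) + 2 * Real.sqrt (r * x) + 2 * x ≤ U ω}
      ≤ ENNReal.ofReal (Real.exp (-x)) :=
  chiSq_laurent_massart_tail_general P U hmeas r hU x hx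
end

section
/- Let Σ be a d×d symmetric real matrix and s ≥ 1 an integer. If |vᵀΣv| ≤ δ for every v ∈ ℝ^d with ‖v‖₀ ≤ 2s and ‖v‖₂ = 1, then for every v ∈ ℝ^d, |vᵀΣv| ≤ 27δ(‖v‖₂² + ‖v‖₁²/s). -/
open Finset Matrix

/-!
Repeatedly splitting off the `s` largest entries writes `v = ∑ₖ uₖ` with every `uₖ` `s`-sparse.
Each entry of block `k + 1` is at most the mean `‖uₖ‖₁ / s` of block `k`, so
`‖uₖ₊₁‖₂ ≤ ‖uₖ‖₁ / √s` and `∑ₖ ‖uₖ‖₂ ≤ ‖v‖₂ + ‖v‖₁ / √s`. Since `u ± w` is `2s`-sparse,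
polarization gives `|uᵀΣw + wᵀΣu| ≤ 2δ ‖u‖₂ ‖w‖₂` for `s`-sparse `u, w`, and expanding `vᵀΣv`
over the blocks yields `|vᵀΣv| ≤ δ (‖v‖₂ + ‖v‖₁ / √s)² ≤ 2δ (‖v‖₂² + ‖v‖₁² / s)`.
-/

variable {ι : Type*} {s : ℕ}

theorem exists_subset_card_eq_mul_abs_le_sum (w : ι → ℝ) {S : Finset ι} (hS : s ≤ S.card) :
    ∃ A ⊆ S, A.card = s ∧ ∀ j ∈ S, j ∉ A → s * |w j| ≤ ∑ i ∈ A, |w i| := by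
  classical
  obtain ⟨A, hA, hmax⟩ := exists_max_image (S.powersetCard s) (fun A => ∑ i ∈ A, |w i|)
    (powersetCard_nonempty.2 hS)
  obtain ⟨hAS, hAcard⟩ := mem_powersetCard.1 hA
  refine ⟨A, hAS, hAcard, fun j hjS hjA => ?_⟩
  have hswap : ∀ i ∈ A, |w j| ≤ |w i| := by
    intro i hi
    have hjA' : j ∉ A.erase i := fun h => hjA (mem_of_mem_erase h)
    have hmem : insert j (A.erase i) ∈ S.powersetCard s := by
      refine mem_powersetCard.2 ⟨insert_subset hjS ((erase_subset i A).trans hAS), ?_⟩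
      rw [card_insert_of_notMem hjA', card_erase_of_mem hi]
      have := card_pos.2 ⟨i, hi⟩
      omega
    have := hmax _ hmem
    rw [sum_insert hjA', ← add_sum_erase A _ hi] at this
    linarith
  calc s * |w j| = ∑ _i ∈ A, |w j| := by rw [sum_const, hAcard, nsmul_eq_mul]
    _ ≤ ∑ i ∈ A, |w i| := sum_le_sum hswap

variable [Fintype ι]

theorem dotProduct_self_nonneg {R : Type*} [Ring R] [LinearOrder R] [IsStrictOrderedRing R]
    (v : ι → R) : 0 ≤ v ⬝ᵥ v :=
  sum_nonneg fun i _ => mul_self_nonneg (v i)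

theorem dotProduct_self_pos {R : Type*} [Ring R] [LinearOrder R] [IsStrictOrderedRing R]
    {v : ι → R} (hv : v ≠ 0) : 0 < v ⬝ᵥ v :=
  (dotProduct_self_nonneg v).lt_of_ne (Ne.symm (dotProduct_self_eq_zero.not.2 hv))

theorem sum_sq_eq_dotProduct_self (v : ι → ℝ) : ∑ i, v i ^ 2 = v ⬝ᵥ v := by
  simp only [dotProduct, sq]

theorem ncard_support_add_le {M : Type*} [AddZeroClass M] (x y : ι → M) :
    (Function.support (x + y)).ncard ≤ (Function.support x).ncard + (Function.support y).ncard :=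
  (Set.ncard_le_ncard (Function.support_add x y)).trans (Set.ncard_union_le _ _)

theorem ncard_support_sub_le {G : Type*} [SubtractionMonoid G] (x y : ι → G) :
    (Function.support (x - y)).ncard ≤ (Function.support x).ncard + (Function.support y).ncard :=
  (Set.ncard_le_ncard (Function.support_sub x y)).trans (Set.ncard_union_le _ _)

theorem ncard_support_smul_le {R M : Type*} [Zero M] [SMulZeroClass R M] (c : R) (x : ι → M) :
    (Function.support (c • x)).ncard ≤ (Function.support x).ncard :=
  Set.ncard_le_ncard (Function.support_const_smul_subset c x)

theorem sqrt_dotProduct_self_le_sqrt_mul {u : ι → ℝ} (hu : (Function.support u).ncard ≤ s) {M : ℝ}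
    (hM0 : 0 ≤ M) (hM : ∀ i, |u i| ≤ M) : √(u ⬝ᵥ u) ≤ √s * M := by
  classical
  set T := (Function.support u).toFinset
  have hsq : u ⬝ᵥ u ≤ s * M ^ 2 :=
    calc u ⬝ᵥ u = ∑ i ∈ T, u i * u i :=
          (sum_subset (subset_univ T) fun i _ hi => by simp_all [T]).symm
      _ ≤ ∑ _i ∈ T, M ^ 2 := sum_le_sum fun i _ => by
          rw [← abs_mul_abs_self, ← sq]; exact pow_le_pow_left₀ (abs_nonneg _) (hM i) 2
      _ ≤ s * M ^ 2 := by
          rw [sum_const, nsmul_eq_mul, ← Set.ncard_eq_toFinset_card']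
          gcongr
  rw [← Real.sqrt_sq hM0, ← Real.sqrt_mul (Nat.cast_nonneg _)]
  exact Real.sqrt_le_sqrt hsq

theorem exists_add_of_le_card (hs : 0 < s) {S : Finset ι} (hS : s ≤ S.card) {w : ι → ℝ}
    (hw : Function.support w ⊆ S) :
    ∃ T ⊂ S, ∃ w₀ r : ι → ℝ, w = w₀ + r ∧ (Function.support w₀).ncard ≤ s ∧
      Function.support r ⊆ T ∧ (∀ i, |w i| = |w₀ i| + |r i|) ∧
      ∀ i, s * |r i| ≤ ∑ i, |w₀ i| := by
  classical
  obtain ⟨A, hAS, hAcard, htop⟩ := exists_subset_card_eq_mul_abs_le_sum w hS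
  refine ⟨S \ A, sdiff_ssubset hAS (card_pos.1 (hAcard ▸ hs)), (A : Set ι).indicator w,
    (A : Set ι)ᶜ.indicator w, (Set.indicator_self_add_compl _ _).symm, ?_, ?_, ?_, ?_⟩
  · calc (Function.support ((A : Set ι).indicator w)).ncard ≤ (A : Set ι).ncard :=
          Set.ncard_le_ncard Set.support_indicator_subset
      _ = s := by rw [Set.ncard_coe_finset, hAcard]
  · intro i hi
    have hiA : i ∉ A := fun h => hi (Set.indicator_of_notMem (by simpa using h) w)
    have hiS : i ∈ S := hw (by simpa [hiA] using hi)
    simp [hiS, hiA]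
  · intro i
    by_cases hi : i ∈ A <;> simp [hi]
  · have hsum : ∑ i, |(A : Set ι).indicator w i| = ∑ i ∈ A, |w i| := by
      rw [← sum_indicator_subset (fun i => |w i|) (subset_univ A)]
      exact sum_congr rfl fun j _ => by by_cases hj : j ∈ A <;> simp [hj]
    intro i
    rw [hsum]
    by_cases hiA : i ∈ A
    · simpa [hiA] using sum_nonneg fun j _ => abs_nonneg (w j)
    by_cases hiS : i ∈ S
    · simpa [hiA] using htop i hiS hiA
    · have : w i = 0 := Function.notMem_support.1 fun h => hiS (hw h)
      simpa [hiA, this] using sum_nonneg fun j _ => abs_nonneg (w j)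

theorem exists_sparse_decomposition (hs : 0 < s) (S : Finset ι) (w : ι → ℝ)
    (hw : Function.support w ⊆ S) :
    ∃ (u : ι → ℝ) (l : List (ι → ℝ)), w = u + l.sum ∧ (Function.support u).ncard ≤ s ∧
      (∀ i, |u i| ≤ |w i|) ∧ (∀ x ∈ l, (Function.support x).ncard ≤ s) ∧
      (l.map fun x => √(x ⬝ᵥ x)).sum ≤ (∑ i, |w i|) / √s := by
  induction S using Finset.strongInduction generalizing w with
  | H S ih =>
  rcases le_or_gt S.card s with hS | hS
  · refine ⟨w, [], by simp, ?_, fun i => le_rfl, by simp, by simp; positivity⟩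
    exact (Set.ncard_le_ncard hw).trans (by simpa using hS)
  obtain ⟨T, hTS, w₀, r, rfl, hw₀, hr, habs, hrM⟩ := exists_add_of_le_card hs hS.le hw
  obtain ⟨u, l, rfl, hu, hur, hl, hlsum⟩ := ih T hTS r hr
  have hu_norm : √(u ⬝ᵥ u) ≤ (∑ i, |w₀ i|) / √s :=
    calc √(u ⬝ᵥ u) ≤ √s * ((∑ i, |w₀ i|) / s) :=
          sqrt_dotProduct_self_le_sqrt_mul hu (by positivity) fun i => (hur i).trans
            ((le_div_iff₀ (by exact_mod_cast hs)).2 (by rw [mul_comm]; exact hrM i))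
      _ = (∑ i, |w₀ i|) / √s := by
          rw [mul_div_left_comm, Real.sqrt_div_self', mul_one_div]
  refine ⟨w₀, u :: l, by rw [List.sum_cons], hw₀,
    fun i => by rw [habs i]; exact le_add_of_nonneg_right (abs_nonneg _),
    List.forall_mem_cons.2 ⟨hu, hl⟩, ?_⟩
  calc (List.map (fun x => √(x ⬝ᵥ x)) (u :: l)).sum
        = √(u ⬝ᵥ u) + (l.map fun x => √(x ⬝ᵥ x)).sum := by simp
    _ ≤ (∑ i, |w₀ i|) / √s + (∑ i, |(u + l.sum) i|) / √s := add_le_add hu_norm hlsum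
    _ = (∑ i, |(w₀ + (u + l.sum)) i|) / √s := by simp only [habs, sum_add_distrib, add_div]

theorem exists_list_sparse_sum_eq (hs : 0 < s) (v : ι → ℝ) :
    ∃ l : List (ι → ℝ), l.sum = v ∧ (∀ x ∈ l, (Function.support x).ncard ≤ s) ∧
      (l.map fun x => √(x ⬝ᵥ x)).sum ≤ √(v ⬝ᵥ v) + (∑ i, |v i|) / √s := by
  obtain ⟨u, l, hv, hu, huv, hl, hlsum⟩ := exists_sparse_decomposition hs univ v (by simp)
  refine ⟨u :: l, by simp [hv], List.forall_mem_cons.2 ⟨hu, hl⟩, ?_⟩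
  rw [List.map_cons, List.sum_cons]
  gcongr
  exact sum_le_sum fun i _ => by
    rw [← abs_mul_abs_self, ← abs_mul_abs_self (v i)]
    exact mul_self_le_mul_self (abs_nonneg _) (huv i)

section QuadraticForm

variable (Sig : Matrix ι ι ℝ) {δ : ℝ}

theorem abs_quadForm_le_of_unit {k : ℕ}
    (hunit : ∀ v : ι → ℝ, (univ.filter fun i => v i ≠ 0).card ≤ k → ∑ i, v i ^ 2 = 1 →
      |v ⬝ᵥ Sig *ᵥ v| ≤ δ)
    {u : ι → ℝ} (hu : (Function.support u).ncard ≤ k) : |u ⬝ᵥ Sig *ᵥ u| ≤ δ * (u ⬝ᵥ u) := by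
  rcases eq_or_ne u 0 with rfl | hu0
  · simp
  set c := √(u ⬝ᵥ u)
  have hc : 0 < c := Real.sqrt_pos.2 (dotProduct_self_pos hu0)
  have hc2 : c ^ 2 = u ⬝ᵥ u := Real.sq_sqrt (dotProduct_self_nonneg u)
  have hcard : (univ.filter fun i => (c⁻¹ • u) i ≠ 0).card ≤ k := by
    simpa [hc.ne', Set.ncard_eq_toFinset_card', Function.support] using hu
  have hnorm : ∑ i, (c⁻¹ • u) i ^ 2 = 1 := by
    rw [sum_sq_eq_dotProduct_self, dotProduct_smul, smul_dotProduct, smul_eq_mul, smul_eq_mul,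
      ← hc2]
    field_simp
  have h := hunit _ hcard hnorm
  rw [mulVec_smul, dotProduct_smul, smul_dotProduct, smul_eq_mul, smul_eq_mul, ← mul_assoc,
    abs_mul, abs_of_pos (by positivity)] at h
  calc |u ⬝ᵥ Sig *ᵥ u| = c ^ 2 * (c⁻¹ * c⁻¹ * |u ⬝ᵥ Sig *ᵥ u|) := by field_simp
    _ ≤ c ^ 2 * δ := by gcongr
    _ = δ * (u ⬝ᵥ u) := by rw [hc2, mul_comm]

theorem abs_polar_le
    (hQ : ∀ u : ι → ℝ, (Function.support u).ncard ≤ 2 * s → |u ⬝ᵥ Sig *ᵥ u| ≤ δ * (u ⬝ᵥ u))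
    {a b : ι → ℝ} (ha : (Function.support a).ncard ≤ s) (hb : (Function.support b).ncard ≤ s) :
    |a ⬝ᵥ Sig *ᵥ b + b ⬝ᵥ Sig *ᵥ a| ≤ 2 * δ * √(a ⬝ᵥ a) * √(b ⬝ᵥ b) := by
  rcases eq_or_ne a 0 with rfl | ha0
  · simp
  rcases eq_or_ne b 0 with rfl | hb0
  · simp
  set α := √(a ⬝ᵥ a)
  set β := √(b ⬝ᵥ b)
  have hαβ : 0 < 2 * (α * β) :=
    mul_pos two_pos (mul_pos (Real.sqrt_pos.2 (dotProduct_self_pos ha0))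
      (Real.sqrt_pos.2 (dotProduct_self_pos hb0)))
  set x := β • a
  set y := α • b
  have hx : (Function.support x).ncard ≤ s := (ncard_support_smul_le β a).trans ha
  have hy : (Function.support y).ncard ≤ s := (ncard_support_smul_le α b).trans hb
  have hpolar : (x + y) ⬝ᵥ Sig *ᵥ (x + y) - (x - y) ⬝ᵥ Sig *ᵥ (x - y) =
      2 * (α * β) * (a ⬝ᵥ Sig *ᵥ b + b ⬝ᵥ Sig *ᵥ a) := by
    simp only [x, y, mulVec_add, mulVec_sub, mulVec_smul, dotProduct_add, dotProduct_sub,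
      add_dotProduct, sub_dotProduct, dotProduct_smul, smul_dotProduct, smul_eq_mul]
    ring
  have hpar : (x + y) ⬝ᵥ (x + y) + (x - y) ⬝ᵥ (x - y) = 4 * (α * β) ^ 2 := by
    simp only [x, y, dotProduct_add, dotProduct_sub, add_dotProduct,
      sub_dotProduct, dotProduct_smul, smul_dotProduct, smul_eq_mul]
    rw [← Real.sq_sqrt (dotProduct_self_nonneg a), ← Real.sq_sqrt (dotProduct_self_nonneg b)]
    ring
  have key : 2 * (α * β) * |a ⬝ᵥ Sig *ᵥ b + b ⬝ᵥ Sig *ᵥ a| ≤ 2 * (α * β) * (2 * δ * α * β) :=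
    calc 2 * (α * β) * |a ⬝ᵥ Sig *ᵥ b + b ⬝ᵥ Sig *ᵥ a|
        = |(x + y) ⬝ᵥ Sig *ᵥ (x + y) - (x - y) ⬝ᵥ Sig *ᵥ (x - y)| := by
          rw [hpolar, abs_mul, abs_of_pos hαβ]
      _ ≤ |(x + y) ⬝ᵥ Sig *ᵥ (x + y)| + |(x - y) ⬝ᵥ Sig *ᵥ (x - y)| := abs_sub _ _
      _ ≤ δ * ((x + y) ⬝ᵥ (x + y)) + δ * ((x - y) ⬝ᵥ (x - y)) :=
          add_le_add (hQ _ ((ncard_support_add_le x y).trans (by omega)))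
            (hQ _ ((ncard_support_sub_le x y).trans (by omega)))
      _ = 2 * (α * β) * (2 * δ * α * β) := by rw [← mul_add, hpar]; ring
  exact le_of_mul_le_mul_left key hαβ

theorem abs_polar_list_sum_le
    (hQ : ∀ u : ι → ℝ, (Function.support u).ncard ≤ 2 * s → |u ⬝ᵥ Sig *ᵥ u| ≤ δ * (u ⬝ᵥ u))
    {a : ι → ℝ} (ha : (Function.support a).ncard ≤ s) (l : List (ι → ℝ))
    (hl : ∀ x ∈ l, (Function.support x).ncard ≤ s) :
    |a ⬝ᵥ Sig *ᵥ l.sum + l.sum ⬝ᵥ Sig *ᵥ a| ≤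
      2 * δ * √(a ⬝ᵥ a) * (l.map fun x => √(x ⬝ᵥ x)).sum := by
  induction l with
  | nil => simp
  | cons x l ih =>
    rw [List.forall_mem_cons] at hl
    calc |a ⬝ᵥ Sig *ᵥ (x :: l).sum + (x :: l).sum ⬝ᵥ Sig *ᵥ a|
        = |(a ⬝ᵥ Sig *ᵥ x + x ⬝ᵥ Sig *ᵥ a) + (a ⬝ᵥ Sig *ᵥ l.sum + l.sum ⬝ᵥ Sig *ᵥ a)| := by
          simp only [List.sum_cons, mulVec_add, dotProduct_add, add_dotProduct]; ring_nf
      _ ≤ |a ⬝ᵥ Sig *ᵥ x + x ⬝ᵥ Sig *ᵥ a| + |a ⬝ᵥ Sig *ᵥ l.sum + l.sum ⬝ᵥ Sig *ᵥ a| :=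
          abs_add_le _ _
      _ ≤ 2 * δ * √(a ⬝ᵥ a) * √(x ⬝ᵥ x) + 2 * δ * √(a ⬝ᵥ a) * (l.map fun x => √(x ⬝ᵥ x)).sum :=
          add_le_add (abs_polar_le Sig hQ ha hl.1) (ih hl.2)
      _ = 2 * δ * √(a ⬝ᵥ a) * ((x :: l).map fun x => √(x ⬝ᵥ x)).sum := by
          rw [List.map_cons, List.sum_cons]; ring

theorem abs_quadForm_list_sum_le
    (hQ : ∀ u : ι → ℝ, (Function.support u).ncard ≤ 2 * s → |u ⬝ᵥ Sig *ᵥ u| ≤ δ * (u ⬝ᵥ u))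
    (l : List (ι → ℝ)) (hl : ∀ x ∈ l, (Function.support x).ncard ≤ s) :
    |l.sum ⬝ᵥ Sig *ᵥ l.sum| ≤ δ * (l.map fun x => √(x ⬝ᵥ x)).sum ^ 2 := by
  induction l with
  | nil => simp
  | cons x l ih =>
    rw [List.forall_mem_cons] at hl
    calc |(x :: l).sum ⬝ᵥ Sig *ᵥ (x :: l).sum|
        = |x ⬝ᵥ Sig *ᵥ x + (x ⬝ᵥ Sig *ᵥ l.sum + l.sum ⬝ᵥ Sig *ᵥ x) + l.sum ⬝ᵥ Sig *ᵥ l.sum| := by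
          simp only [List.sum_cons, mulVec_add, dotProduct_add, add_dotProduct]; ring_nf
      _ ≤ |x ⬝ᵥ Sig *ᵥ x| + |x ⬝ᵥ Sig *ᵥ l.sum + l.sum ⬝ᵥ Sig *ᵥ x| + |l.sum ⬝ᵥ Sig *ᵥ l.sum| :=
          abs_add_three _ _ _
      _ ≤ δ * √(x ⬝ᵥ x) ^ 2 + 2 * δ * √(x ⬝ᵥ x) * (l.map fun x => √(x ⬝ᵥ x)).sum
            + δ * (l.map fun x => √(x ⬝ᵥ x)).sum ^ 2 := by
          gcongr
          · rw [Real.sq_sqrt (dotProduct_self_nonneg x)]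
            exact hQ x (hl.1.trans (by omega))
          · exact abs_polar_list_sum_le Sig hQ hl.1 l hl.2
          · exact ih hl.2
      _ = δ * ((x :: l).map fun x => √(x ⬝ᵥ x)).sum ^ 2 := by
          rw [List.map_cons, List.sum_cons]; ring

end QuadraticForm

theorem nonneg_of_forall_sparse_unit (Sig : Matrix ι ι ℝ) {δ : ℝ} {k : ℕ} (hk : 1 ≤ k) (i : ι)
    (hunit : ∀ v : ι → ℝ, (univ.filter fun i => v i ≠ 0).card ≤ k → ∑ i, v i ^ 2 = 1 →
      |v ⬝ᵥ Sig *ᵥ v| ≤ δ) : 0 ≤ δ := by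
  classical
  have hcard : (univ.filter fun j => (Pi.single i 1 : ι → ℝ) j ≠ 0).card ≤ k :=
    (card_le_one.2 fun a ha b hb => by simp_all [Pi.single_apply]).trans hk
  exact (abs_nonneg _).trans (hunit (Pi.single i 1) hcard (by simp [Pi.single_apply]))

theorem restricted_quadratic_form_extension_general
    {d : ℕ} (Sig : Matrix (Fin d) (Fin d) ℝ)
    (s : ℕ) (hs : 1 ≤ s) (δ : ℝ)
    (hsparse : ∀ v : Fin d → ℝ,
      (Finset.univ.filter (fun i => v i ≠ 0)).card ≤ 2 * s →
      ∑ i, (v i) ^ 2 = 1 →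
      |dotProduct v (Sig.mulVec v)| ≤ δ) :
    ∀ v : Fin d → ℝ,
      |dotProduct v (Sig.mulVec v)|
        ≤ 27 * δ * (∑ i, (v i) ^ 2 + (∑ i, |v i|) ^ 2 / s) := by
  intro v
  rcases eq_or_ne v 0 with rfl | hv
  · simp
  obtain ⟨i, -⟩ := Function.ne_iff.1 hv
  have hδ : 0 ≤ δ := nonneg_of_forall_sparse_unit Sig (by omega) i hsparse
  obtain ⟨l, hlv, hl, hlsum⟩ := exists_list_sparse_sum_eq hs v
  have hN : 0 ≤ (l.map fun x => √(x ⬝ᵥ x)).sum :=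
    List.sum_nonneg fun x hx => by obtain ⟨y, -, rfl⟩ := List.mem_map.1 hx; positivity
  calc |v ⬝ᵥ Sig *ᵥ v| = |l.sum ⬝ᵥ Sig *ᵥ l.sum| := by rw [hlv]
    _ ≤ δ * (l.map fun x => √(x ⬝ᵥ x)).sum ^ 2 :=
        abs_quadForm_list_sum_le Sig (fun u hu => abs_quadForm_le_of_unit Sig hsparse hu) l hl
    _ ≤ δ * (√(v ⬝ᵥ v) + (∑ i, |v i|) / √s) ^ 2 := by gcongr
    _ ≤ δ * (2 * (√(v ⬝ᵥ v) ^ 2 + ((∑ i, |v i|) / √s) ^ 2)) := by gcongr; exact add_sq_le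
    _ ≤ 27 * δ * (∑ i, v i ^ 2 + (∑ i, |v i|) ^ 2 / s) := by
        rw [Real.sq_sqrt (dotProduct_self_nonneg v), div_pow, Real.sq_sqrt (Nat.cast_nonneg s),
          sum_sq_eq_dotProduct_self]
        have : 0 ≤ v ⬝ᵥ v + (∑ i, |v i|) ^ 2 / s :=
          add_nonneg (dotProduct_self_nonneg v) (by positivity)
        nlinarith

/-- Lemma 12 of Loh and Wainwright (2011): a quadratic-form bound over `2s`-sparse unit
vectors extends to all vectors with constant `27`. -/
theorem restricted_quadratic_form_extension
    {d : ℕ} (Sig : Matrix (Fin d) (Fin d) ℝ) (hsymm : Sig.IsSymm)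
    (s : ℕ) (hs : 1 ≤ s) (δ : ℝ)
    (hsparse : ∀ v : Fin d → ℝ,
      (Finset.univ.filter (fun i => v i ≠ 0)).card ≤ 2 * s →
      ∑ i, (v i) ^ 2 = 1 →
      |dotProduct v (Sig.mulVec v)| ≤ δ) :
    ∀ v : Fin d → ℝ,
      |dotProduct v (Sig.mulVec v)|
        ≤ 27 * δ * (∑ i, (v i) ^ 2 + (∑ i, |v i|) ^ 2 / s) :=
  restricted_quadratic_form_extension_general Sig s hs δ hsparse
end
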